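/- Conversely, if the continued fraction expansion of an irrational x > 0 is eventually periodic, then x is a quadratic irrational: x satisfies a polynomial equation of degree 2 with integer coefficients. -/

import Mathlib

/-- Complete quotients of the continued fraction of x : x₀ = x, x_{k+1} = 1/(x_k - ⌊x_k⌋). -/
noncomputable def cq (x : ℝ) : ℕ → ℝ
  | 0 => x
  | k + 1 => 1 / (cq x k - (⌊cq x k⌋ : ℝ))

/-- Partial quotients a_k = ⌊x_k⌋. -/
noncomputable def pq (x : ℝ) (k : ℕ) : ℤ := ⌊cq x k⌋

/-! If `x_m` is the complete quotient from which the expansion becomes purely periodic with period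
`n`, then uniqueness of continued fraction expansions gives `x_{m+n} = x_m`. Unwinding
`n ≥ 1` steps of `z = a + 1/z'` writes `x_m = (p x_{m+n} + p') / (q x_{m+n} + q')` with
integers `q ≥ 1`, `q' ≥ 0`, so `x_m` satisfies `q X² + (q' - p) X - p' = 0`. Finally a root of an
integer quadratic stays one under `y ↦ a + 1/y` (for irrational `y`), which carries the
equation from `x_m` back to `x = x_0`. -/

def IsQuadraticRoot (x : ℝ) : Prop :=
  ∃ A B C : ℤ, A ≠ 0 ∧ (A : ℝ) * x ^ 2 + (B : ℝ) * x + (C : ℝ) = 0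

theorem IsQuadraticRoot.intCast_add_inv {y : ℝ} (hy : Irrational y) (hq : IsQuadraticRoot y)
    (n : ℤ) : IsQuadraticRoot (n + y⁻¹) := by
  obtain ⟨A, B, C, hA, hroot⟩ := hq
  have hy0 : y ≠ 0 := hy.ne_zero
  have hC : C ≠ 0 := by
    rintro rfl
    have hlin : (A : ℝ) * y + B = 0 := by
      have : y * ((A : ℝ) * y + B) = 0 := by linear_combination hroot
      exact (mul_eq_zero.mp this).resolve_left hy0
    exact ((hy.intCast_mul hA).add_intCast B).ne_zero hlin
  -- divide the equation by `y²` and substitute `y⁻¹ = (n + y⁻¹) - n`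
  refine ⟨C, B - 2 * C * n, A - B * n + C * n ^ 2, hC, ?_⟩
  push_cast
  field_simp
  linear_combination hroot

section ContinuedFraction

variable {x : ℝ}

theorem cq_succ (x : ℝ) (k : ℕ) : cq x (k + 1) = (Int.fract (cq x k))⁻¹ := by
  rw [cq, Int.fract, one_div]

theorem cq_eq_pq_add_inv (x : ℝ) (k : ℕ) : cq x k = pq x k + (cq x (k + 1))⁻¹ := by
  rw [cq_succ, inv_inv, pq, Int.floor_add_fract]

theorem cq_add (x : ℝ) (m k : ℕ) : cq x (m + k) = cq (cq x m) k := by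
  induction k with
  | zero => rfl
  | succ k ih => rw [← Nat.add_assoc, cq_succ, ih, cq_succ]

theorem pq_add (x : ℝ) (m k : ℕ) : pq x (m + k) = pq (cq x m) k := by
  rw [pq, pq, cq_add]

theorem irrational_cq (hx : Irrational x) : ∀ k, Irrational (cq x k)
  | 0 => hx
  | k + 1 => by
    rw [cq_succ, Int.fract]
    exact ((irrational_cq hx k).sub_intCast _).inv

theorem Irrational.fract_cq_pos (hx : Irrational x) (k : ℕ) : 0 < Int.fract (cq x k) :=
  (Int.fract_nonneg _).lt_of_ne' ((irrational_cq hx k).sub_intCast _).ne_zero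

theorem Irrational.one_le_pq_succ (hx : Irrational x) (k : ℕ) : 1 ≤ pq x (k + 1) := by
  rw [pq, Int.le_floor, cq_succ, Int.cast_one]
  exact ((one_lt_inv_iff₀).mpr ⟨hx.fract_cq_pos k, Int.fract_lt_one _⟩).le

theorem IsQuadraticRoot.of_cq (hx : Irrational x) :
    ∀ m, IsQuadraticRoot (cq x m) → IsQuadraticRoot x
  | 0, h => h
  | m + 1, h => by
    refine IsQuadraticRoot.of_cq hx m ?_
    rw [cq_eq_pq_add_inv x m]
    exact h.intCast_add_inv (irrational_cq hx (m + 1)) _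

open GenContFract GenContFract.IntFractPair in
theorem Irrational.intFractPair_stream_eq (hx : Irrational x) :
    ∀ k, IntFractPair.stream x k = some ⟨pq x k, Int.fract (cq x k)⟩
  | 0 => rfl
  | k + 1 => by
    rw [IntFractPair.stream_succ_of_some (hx.intFractPair_stream_eq k) (hx.fract_cq_pos k).ne']
    simp only [IntFractPair.of, cq_succ, pq]

open GenContFract GenContFract.IntFractPair in
theorem GenContFract.of_eq_of_forall_pq_eq {u v : ℝ} (hu : Irrational u) (hv : Irrational v)
    (hpq : ∀ k, pq u k = pq v k) : GenContFract.of u = GenContFract.of v := by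
  have hh : (GenContFract.of u).h = (GenContFract.of v).h := by
    rw [of_h_eq_floor, of_h_eq_floor]
    exact_mod_cast hpq 0
  have hs : (GenContFract.of u).s = (GenContFract.of v).s := by
    apply Stream'.Seq.ext
    intro n
    rw [get?_of_eq_some_of_succ_get?_intFractPair_stream (hu.intFractPair_stream_eq (n + 1)),
      get?_of_eq_some_of_succ_get?_intFractPair_stream (hv.intFractPair_stream_eq (n + 1)),
      hpq (n + 1)]
  cases hof : GenContFract.of u
  cases hof' : GenContFract.of v
  simp_all

theorem eq_of_forall_pq_eq {u v : ℝ} (hu : Irrational u) (hv : Irrational v)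
    (hpq : ∀ k, pq u k = pq v k) : u = v := by
  have hu_lim := GenContFract.of_convergence u (K := ℝ)
  rw [GenContFract.of_eq_of_forall_pq_eq hu hv hpq] at hu_lim
  exact tendsto_nhds_unique hu_lim (GenContFract.of_convergence v)

theorem Irrational.exists_mul_linear_cq_succ_eq (hx : Irrational x) :
    ∀ k, ∃ p p' q q' : ℤ, 0 < q ∧ 0 ≤ q' ∧
      x * (q * cq x (k + 1) + q') = p * cq x (k + 1) + p'
  | 0 => by
    refine ⟨pq x 0, 1, 1, 0, one_pos, le_rfl, ?_⟩
    have hx1 : cq x 1 ≠ 0 := (irrational_cq hx 1).ne_zero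
    have hx0 : x = pq x 0 + (cq x 1)⁻¹ := cq_eq_pq_add_inv x 0
    push_cast
    linear_combination cq x 1 * hx0 + mul_inv_cancel₀ hx1
  | k + 1 => by
    obtain ⟨p, p', q, q', hq, hq', h⟩ := Irrational.exists_mul_linear_cq_succ_eq hx k
    have ha : 1 ≤ pq x (k + 1) := hx.one_le_pq_succ k
    -- the continuant recurrence `(q, q') ↦ (a q + q', q)`, with `a = a_{k+1} ≥ 1`
    refine ⟨p * pq x (k + 1) + p', p, q * pq x (k + 1) + q', q, by nlinarith, hq.le, ?_⟩
    have hz : cq x (k + 2) ≠ 0 := (irrational_cq hx (k + 2)).ne_zero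
    rw [cq_eq_pq_add_inv x (k + 1)] at h
    field_simp at h
    push_cast
    linear_combination h

theorem Irrational.isQuadraticRoot_of_cq_eq_self (hx : Irrational x) {n : ℕ}
    (hn : cq x (n + 1) = x) : IsQuadraticRoot x := by
  obtain ⟨p, p', q, q', hq, -, h⟩ := hx.exists_mul_linear_cq_succ_eq n
  rw [hn] at h
  exact ⟨q, q' - p, -p', hq.ne', by push_cast; linear_combination h⟩

end ContinuedFraction

theorem periodic_cf_quadratic_general (x : ℝ) (hirr : Irrational x)
    (m per : ℕ) (hper : 1 ≤ per) (h : ∀ k ≥ m, pq x (k + per) = pq x k) :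
    ∃ A B C : ℤ, A ≠ 0 ∧ (A : ℝ) * x ^ 2 + (B : ℝ) * x + (C : ℝ) = 0 := by
  set t := cq x m
  have ht : Irrational t := irrational_cq hirr m
  have ht_periodic : cq t per = t := by
    refine eq_of_forall_pq_eq (irrational_cq ht per) ht fun k => ?_
    rw [← pq_add, ← pq_add, ← pq_add, Nat.add_comm per, ← Nat.add_assoc]
    exact h (m + k) (Nat.le_add_right m k)
  obtain ⟨n, rfl⟩ : ∃ n, per = n + 1 := ⟨per - 1, by omega⟩
  exact IsQuadraticRoot.of_cq hirr m (ht.isQuadraticRoot_of_cq_eq_self ht_periodic)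

/-- If the continued fraction expansion of a positive irrational x is eventually
periodic, then x is a quadratic irrational: A·x² + B·x + C = 0 for some integers
A, B, C with A ≠ 0. -/
theorem periodic_cf_quadratic (x : ℝ) (hx : 0 < x) (hirr : Irrational x)
    (m per : ℕ) (hper : 1 ≤ per) (h : ∀ k ≥ m, pq x (k + per) = pq x k) :
    ∃ A B C : ℤ, A ≠ 0 ∧ (A : ℝ) * x ^ 2 + (B : ℝ) * x + (C : ℝ) = 0 :=
  periodic_cf_quadratic_general x hirr m per hper h
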